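/- arXiv:math/0612482 — 4 statements merged into one kernel-verified Lean document; each statement's English description precedes it below -/
import Mathlib

section
/- The closure of any prenilpotent set of roots is prenilpotent. More precisely, the closure of Φ is contained in (Σ_{α ∈ Φ} ℤ₊·α) ∩ Δ, and hence any element w of the Weyl group mapping Φ into the positive roots maps the closure of Φ into the positive roots. -/
/-- The closure of any prenilpotent set of roots is prenilpotent.  More precisely,
the closure of `Φ` (the smallest subset of `Δ` containing `Φ` that is stable under
taking sums which are roots) is contained in `(Σ_{α ∈ Φ} ℤ₊·α) ∩ Δ`, and hence any
(additive, root-permuting) Weyl group element `w` mapping `Φ` into the positive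
roots maps the closure of `Φ` into the positive roots.

The hypothesis `hpos` expresses the standard fact that a root which is a
nonnegative integral combination of positive roots is itself positive. -/
theorem closure_of_prenilpotent {V : Type*} [AddCommGroup V] (Δ Δpos : Set V)
    (hpos : ∀ x ∈ Δ, x ∈ AddSubmonoid.closure Δpos → x ∈ Δpos)
    (Φ : Set V) (hΦ : Φ ⊆ Δ)
    (closureΦ : Set V)
    (hclosure : closureΦ =
      ⋂₀ {S : Set V | S ⊆ Δ ∧ (∀ α ∈ S, ∀ β ∈ S, α + β ∈ Δ → α + β ∈ S) ∧ Φ ⊆ S}) :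
    closureΦ ⊆ (AddSubmonoid.closure Φ : Set V) ∩ Δ ∧
    ∀ w : V ≃+ V, (∀ α ∈ Δ, w α ∈ Δ) → (∀ α ∈ Φ, w α ∈ Δpos) →
      ∀ β ∈ closureΦ, w β ∈ Δpos := by
  have key : closureΦ ⊆ (AddSubmonoid.closure Φ : Set V) ∩ Δ := by
    rw [hclosure]
    intro x hx
    exact hx _ ⟨Set.inter_subset_right,
      fun α hα β hβ h => ⟨add_mem hα.1 hβ.1, h⟩,
      fun α hα => ⟨AddSubmonoid.subset_closure hα, hΦ hα⟩⟩
  refine ⟨key, fun w hwΔ hwΦ β hβ => ?_⟩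
  obtain ⟨hβc, hβΔ⟩ := key hβ
  apply hpos _ (hwΔ _ hβΔ)
  have : w β ∈ AddSubmonoid.map (w : V →+ V) (AddSubmonoid.closure Φ) :=
    ⟨β, hβc, rfl⟩
  rw [AddMonoidHom.map_mclosure] at this
  refine AddSubmonoid.closure_mono ?_ this
  rintro _ ⟨α, hα, rfl⟩
  exact hwΦ _ hα
end

section
/- Let α, β be real roots with D(α) ⊆ D(β). Then D(r_β(α)) ⊆ D(−β); in particular D(r_β(α)) ∩ D(α) = ∅ whenever D(α) ⊆ D(β). -/
/-- Let `α, β` be real roots with `D(α) ⊆ D(β)`.  Then `D(r_β(α)) ⊆ D(−β)`; in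
particular `D(r_β(α)) ∩ D(α) = ∅` whenever `D(α) ⊆ D(β)`.

Here `rβα` denotes the reflected root `r_β(α)` and `rd` the action of the
reflection `r_β` on the dual space; the hypotheses record that `r_β` preserves
the interior `X` of the Tits cone, is involutive, is adjoint to the reflection on
roots (`⟨r_β(α), x⟩ = ⟨α, r_β(x)⟩`), and maps `D(β)` onto `D(−β)`. -/
theorem reflected_halfspace_disjoint {V Vd : Type*} [AddCommGroup V] [Module ℝ V]
    [AddCommGroup Vd] [Module ℝ Vd]
    (pair : V →ₗ[ℝ] Vd →ₗ[ℝ] ℝ) (X : Set Vd)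
    (D : V → Set Vd) (hD : ∀ γ, D γ = {x ∈ X | 0 < pair γ x})
    (α β rβα : V) (rd : Vd → Vd)
    (hrdX : ∀ x ∈ X, rd x ∈ X)
    (hinv : ∀ x ∈ X, rd (rd x) = x)
    (hadj : ∀ x ∈ X, pair rβα x = pair α (rd x))
    (hmap : ∀ x ∈ X, (x ∈ D β ↔ rd x ∈ D (-β)))
    (hsub : D α ⊆ D β) :
    D rβα ⊆ D (-β) ∧ D rβα ∩ D α = ∅ := by
  have key : D rβα ⊆ D (-β) := by
    intro x hx
    rw [hD] at hx
    obtain ⟨hxX, hxp⟩ := hx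
    have hrdx : rd x ∈ X := hrdX x hxX
    have hα : rd x ∈ D α := by
      rw [hD]
      exact ⟨hrdx, by rw [← hadj x hxX]; exact hxp⟩
    have := (hmap (rd x) hrdx).mp (hsub hα)
    rwa [hinv x hxX] at this
  refine ⟨key, ?_⟩
  ext x
  simp only [Set.mem_inter_iff, Set.mem_empty_iff_false, iff_false, not_and]
  intro h1 h2
  have hnb := key h1
  rw [hD] at hnb
  have hb := hsub h2
  rw [hD] at hb
  have := hnb.2
  rw [map_neg] at this
  simp at this
  linarith [hb.2]
end

section
/- Let {α, α', β, β'} be a prenilpotent set of real roots with D(α) ⊊ D(α') and D(β) ⊊ D(β'). If ∂β and ∂β' both meet ∂α' and ∂β' meets ∂α, then ∂β meets ∂α. -/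
/-- A set of real roots is *prenilpotent* if some Weyl group element maps it into
the positive roots and another maps it into the negative roots. -/
def IsPrenilpotent {V W : Type*} [AddCommGroup V] [Module ℝ V] [Group W]
    (ρ : W →* (V ≃ₗ[ℝ] V)) (Δpos : Set V) (Φ : Set V) : Prop :=
  (∃ w : W, ∀ γ ∈ Φ, ρ w γ ∈ Δpos) ∧ (∃ w' : W, ∀ γ ∈ Φ, ρ w' γ ∈ (-Δpos : Set V))

/-- Let `{α, α', β, β'}` be a prenilpotent set of real roots with `D(α) ⊊ D(α')`
and `D(β) ⊊ D(β')`.  If `∂β` and `∂β'` both meet `∂α'` and `∂β'` meets `∂α`,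
then `∂β` meets `∂α`.

Here `D δ = {x ∈ X : ⟨δ,x⟩ > 0}` and `wall δ = {x ∈ X : ⟨δ,x⟩ = 0}` for `X` the
interior of the Tits cone.  The hypothesis `hcomp` records the standard fact that
for a prenilpotent pair whose walls do not meet, the half-spaces are comparable. -/
theorem prenilpotent_quadruple_wall {V Vd W : Type*} [AddCommGroup V] [Module ℝ V]
    [AddCommGroup Vd] [Module ℝ Vd] [Group W]
    (ρ : W →* (V ≃ₗ[ℝ] V)) (Δpos : Set V)
    (pair : V →ₗ[ℝ] Vd →ₗ[ℝ] ℝ) (X : Set Vd)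
    (D wall : V → Set Vd)
    (hD : ∀ γ, D γ = {x ∈ X | 0 < pair γ x})
    (hwall : ∀ γ, wall γ = {x ∈ X | pair γ x = 0})
    (hcomp : ∀ γ δ : V, IsPrenilpotent ρ Δpos {γ, δ} → wall γ ∩ wall δ = ∅ →
      D γ ⊆ D δ ∨ D δ ⊆ D γ)
    (α α' β β' : V)
    (hpren : IsPrenilpotent ρ Δpos {α, α', β, β'})
    (hα : D α ⊂ D α') (hβ : D β ⊂ D β')
    (h1 : (wall β ∩ wall α').Nonempty)
    (h2 : (wall β' ∩ wall α').Nonempty)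
    (h3 : (wall β' ∩ wall α).Nonempty) :
    (wall β ∩ wall α).Nonempty := by
  by_contra hne
  rw [Set.not_nonempty_iff_eq_empty] at hne
  -- walls of -β and -α coincide with walls of β and α
  have wneg : ∀ γ : V, wall (-γ) = wall γ := by
    intro γ
    rw [hwall, hwall]
    ext x
    simp [neg_eq_zero]
  -- {-β, -α} is prenilpotent (swap the two witnesses)
  obtain ⟨⟨w, hw⟩, ⟨w', hw'⟩⟩ := hpren
  have hβmem : β ∈ ({α, α', β, β'} : Set V) := by simp
  have hαmem : α ∈ ({α, α', β, β'} : Set V) := by simp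
  have hprenneg : IsPrenilpotent ρ Δpos ({-β, -α} : Set V) := by
    constructor
    · refine ⟨w', ?_⟩
      intro γ hγ
      rcases hγ with h | h
      · subst h
        have := hw' β hβmem
        simpa using this
      · simp only [Set.mem_singleton_iff] at h
        subst h
        have := hw' α hαmem
        simpa using this
    · refine ⟨w, ?_⟩
      intro γ hγ
      rcases hγ with h | h
      · subst h
        have := hw β hβmem
        simpa using this
      · simp only [Set.mem_singleton_iff] at h
        subst h
        have := hw α hαmem
        simpa using this
  have hcmp := hcomp (-β) (-α) hprenneg (by rw [wneg, wneg]; exact hne)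
  -- point from h1 : pair β w1 = 0, pair α' w1 = 0, and pair α w1 < 0
  obtain ⟨w1, hw1β, hw1α'⟩ := h1
  rw [hwall] at hw1β hw1α'
  obtain ⟨hw1X, hw1β0⟩ := hw1β
  obtain ⟨-, hw1α'0⟩ := hw1α'
  have hw1α : pair α w1 < 0 := by
    rcases lt_trichotomy (pair α w1) 0 with h | h | h
    · exact h
    · exfalso
      have : w1 ∈ wall β ∩ wall α := by
        rw [hwall, hwall]
        exact ⟨⟨hw1X, hw1β0⟩, ⟨hw1X, h⟩⟩
      rw [hne] at this
      exact this
    · exfalso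
      have : w1 ∈ D α' := hα.1 (by rw [hD]; exact ⟨hw1X, h⟩)
      rw [hD] at this
      exact absurd hw1α'0 (ne_of_gt this.2)
  -- point from h3 : pair β' w3 = 0, pair α w3 = 0, and pair β w3 < 0
  obtain ⟨w3, hw3β', hw3α⟩ := h3
  rw [hwall] at hw3β' hw3α
  obtain ⟨hw3X, hw3β'0⟩ := hw3β'
  obtain ⟨-, hw3α0⟩ := hw3α
  have hw3β : pair β w3 < 0 := by
    rcases lt_trichotomy (pair β w3) 0 with h | h | h
    · exact h
    · exfalso
      have : w3 ∈ wall β ∩ wall α := by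
        rw [hwall, hwall]
        exact ⟨⟨hw3X, h⟩, ⟨hw3X, hw3α0⟩⟩
      rw [hne] at this
      exact this
    · exfalso
      have : w3 ∈ D β' := hβ.1 (by rw [hD]; exact ⟨hw3X, h⟩)
      rw [hD] at this
      exact absurd hw3β'0 (ne_of_gt this.2)
  rcases hcmp with hc | hc
  · -- D(-β) ⊆ D(-α): apply to w3
    have : w3 ∈ D (-α) := hc (by rw [hD]; simpa using ⟨hw3X, hw3β⟩)
    rw [hD] at this
    simp only [map_neg, LinearMap.neg_apply, Set.mem_setOf_eq] at this
    linarith [this.2]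
  · -- D(-α) ⊆ D(-β): apply to w1
    have : w1 ∈ D (-β) := hc (by rw [hD]; simpa using ⟨hw1X, hw1α⟩)
    rw [hD] at this
    simp only [map_neg, LinearMap.neg_apply, Set.mem_setOf_eq] at this
    linarith [this.2]
end

section
/- Let Φ₀ be a rank-2 root system of affine type with basis {−β₀, β₁} and Cartan integers ⟨β₀, β₁∨⟩·⟨β₁, β₀∨⟩ = 4, ⟨β₁, β₀∨⟩ > 0. Define φ₁ = β₁ and φ_{k+1} = r_{β₁} r_{β₀}(φ_k). Writing φ_k = x_k·(−β₀) + y_k·β₁ with x_k, y_k ∈ ℤ₊, the difference y_{k+1} − y_k is a positive integer independent of k; consequently y_k ≥ k for all k ≥ 1. -/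
/-- Let `Φ₀` be a rank-2 root system of affine type with basis `{−β₀, β₁}` and
Cartan integers satisfying `⟨β₀, β₁∨⟩·⟨β₁, β₀∨⟩ = 4` and `⟨β₁, β₀∨⟩ > 0`.
Define `φ₁ = β₁` and `φ_{k+1} = r_{β₁} r_{β₀}(φ_k)`, where `r_β(γ) = γ − ⟨γ, β∨⟩·β`.
Writing `φ_k = x_k·(−β₀) + y_k·β₁` with `x_k, y_k ∈ ℤ₊`, the difference
`y_{k+1} − y_k` is a positive integer independent of `k`; consequently
`y_k ≥ k` for all `k ≥ 1`. -/
theorem affine_rank_two_coefficients {V : Type*} [AddCommGroup V]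
    (cartan : V → V → ℤ)
    (hadd : ∀ x y z : V, cartan (x + y) z = cartan x z + cartan y z)
    (hneg : ∀ x z : V, cartan (-x) z = -cartan x z)
    (hsmul : ∀ (n : ℤ) (x z : V), cartan (n • x) z = n * cartan x z)
    (β₀ β₁ : V)
    (hself₀ : cartan β₀ β₀ = 2) (hself₁ : cartan β₁ β₁ = 2)
    (haff : cartan β₀ β₁ * cartan β₁ β₀ = 4) (hpos : 0 < cartan β₁ β₀)
    (hind : ∀ m n : ℤ, m • β₀ + n • β₁ = 0 → m = 0 ∧ n = 0)
    (φ : ℕ → V) (hφ1 : φ 1 = β₁)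
    (hφ : ∀ k ≥ 1, φ (k + 1) =
      (φ k - cartan (φ k) β₀ • β₀) - cartan (φ k - cartan (φ k) β₀ • β₀) β₁ • β₁)
    (x y : ℕ → ℤ)
    (hxy : ∀ k ≥ 1, φ k = x k • (-β₀) + y k • β₁)
    (hx : ∀ k ≥ 1, 0 ≤ x k) (hy : ∀ k ≥ 1, 0 ≤ y k) :
    (∃ c : ℤ, 0 < c ∧ ∀ k ≥ 1, y (k + 1) - y k = c) ∧
      ∀ k : ℕ, 1 ≤ k → (k : ℤ) ≤ y k := by

  set a := cartan β₀ β₁ with ha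
  set b := cartan β₁ β₀ with hb
  have coeff : ∀ m n m' n' : ℤ, m • β₀ + n • β₁ = m' • β₀ + n' • β₁ → m = m' ∧ n = n' := by
    intro m n m' n' h
    have h0 : (m - m') • β₀ + (n - n') • β₁ = 0 := by
      have : (m - m') • β₀ + (n - n') • β₁ = (m • β₀ + n • β₁) - (m' • β₀ + n' • β₁) := by
        module
      rw [this, h, sub_self]
    obtain ⟨h1, h2⟩ := hind _ _ h0
    constructor <;> omega
  have lin : ∀ (m n : ℤ) (z : V), cartan (m • β₀ + n • β₁) z
      = m * cartan β₀ z + n * cartan β₁ z := by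
    intro m n z
    rw [hadd, hsmul, hsmul]
  have rep : ∀ k ≥ 1, φ k = (-(x k)) • β₀ + y k • β₁ := by
    intro k hk
    rw [hxy k hk]; module
  have rec' : ∀ k ≥ 1, x (k + 1) = b * y k - x k ∧ y (k + 1) = 3 * y k - a * x k := by
    intro k hk
    have hrep := rep k hk
    have hc0 : cartan (φ k) β₀ = -(x k) * 2 + y k * b := by
      rw [hrep, lin, hself₀, hb]
    have hψ : φ k - cartan (φ k) β₀ • β₀ = (x k - y k * b) • β₀ + y k • β₁ := by
      rw [hc0, hrep]; module
    have hc1 : cartan (φ k - cartan (φ k) β₀ • β₀) β₁ = (x k - y k * b) * a + y k * 2 := by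
      rw [hψ, lin, hself₁, ha]
    have hφ' : φ (k + 1) = (-(b * y k - x k)) • β₀ + (3 * y k - a * x k) • β₁ := by
      rw [hφ k hk, hc1, hψ]
      match_scalars
      · ring
      · linear_combination y k * haff
    have hrep' := rep (k + 1) (by omega)
    have := coeff _ _ _ _ (hrep'.symm.trans hφ')
    exact ⟨by omega, this.2⟩
  have base : x 1 = 0 ∧ y 1 = 1 := by
    have h1 : (-(x 1)) • β₀ + y 1 • β₁ = (-(0 : ℤ)) • β₀ + (1 : ℤ) • β₁ := by
      rw [← rep 1 le_rfl, hφ1]; module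
    have := coeff _ _ _ _ h1
    exact ⟨by omega, this.2⟩
  have key : ∀ k, 1 ≤ k → 2 * y k - a * x k = 2 := by
    intro k hk
    induction k, hk using Nat.le_induction with
    | base => rw [base.1, base.2]; ring
    | succ n hn ih =>
      obtain ⟨hx', hy'⟩ := rec' n hn
      rw [hx', hy']
      linear_combination ih - y n * haff
  have diff : ∀ k ≥ 1, y (k + 1) - y k = 2 := by
    intro k hk
    linear_combination (rec' k hk).2 + key k hk
  refine ⟨⟨2, by norm_num, diff⟩, ?_⟩
  intro k hk
  induction k, hk using Nat.le_induction with
  | base => simp [base.2]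
  | succ n hn ih =>
    have := diff n hn
    push_cast
    omega
end
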